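/- An admissible multidegree (w, μ) on (Γ, 𝐧) is concentrated at a vertex v₀ ∈ V(Γ) if and only if the induced multidegree w̃ on the subdivided graph Γ̃ satisfies: for every nonempty subset S ⊆ V(Γ̃)∖{v₀} there is some u ∈ S such that w̃(u) is strictly smaller than the number of edges of Γ̃ from u to V(Γ̃)∖S. -/

import Mathlib

open scoped Classical

namespace LLS

variable {V E : Type*}

/-- `σ(e,v)`: `1` if `v` is the tail of `e`, `-1` if `v` is the head of `e`, `0` otherwise. -/
noncomputable def sigma (tail head : E → V) (e : E) (v : V) : ℤ :=
  if tail e = v then 1 else if head e = v then -1 else 0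

/-- The endpoint of `e` other than `v` (for `e` adjacent to `v`). -/
noncomputable def otherEnd (tail head : E → V) (e : E) (v : V) : V :=
  if tail e = v then head e else tail e

/-- The multigraph is loopless. -/
def Loopless (tail head : E → V) : Prop := ∀ e, tail e ≠ head e

/-- The multigraph is connected. -/
def MGConnected (tail head : E → V) : Prop :=
  ∀ u v : V, Relation.ReflTransGen
    (fun a b => ∃ e, (tail e = a ∧ head e = b) ∨ (tail e = b ∧ head e = a)) u v

/-- An admissible multidegree on `(Γ, 𝐧)`: a function `V(Γ) → ℤ` together with an
element `μ(e) ∈ ℤ/𝐧(e)ℤ` for each edge `e`. -/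
structure AdmMD (V E : Type*) (n : E → ℕ) where
  wV : V → ℤ
  mu : ∀ e : E, ZMod (n e)

section FinGraph

variable [Fintype V] [Fintype E] [DecidableEq V] [DecidableEq E]

/-- The twist of an admissible multidegree at a vertex `v`. -/
noncomputable def twist (tail head : E → V) (n : E → ℕ) (w : AdmMD V E n) (v : V) :
    AdmMD V E n where
  wV u := w.wV u
    - (if u = v then ((Finset.univ.filter fun e : E =>
        sigma tail head e v ≠ 0 ∧ w.mu e = 0).card : ℤ) else 0)
    + ((Finset.univ.filter fun e : E => sigma tail head e v ≠ 0 ∧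
        w.mu e + (sigma tail head e v : ZMod (n e)) = 0 ∧
        otherEnd tail head e v = u).card : ℤ)
  mu e := w.mu e + (sigma tail head e v : ZMod (n e))

/-- The negative twist of an admissible multidegree at a vertex `v`
(the inverse of `twist`). -/
noncomputable def negTwist (tail head : E → V) (n : E → ℕ) (w : AdmMD V E n) (v : V) :
    AdmMD V E n where
  wV u := w.wV u
    + (if u = v then ((Finset.univ.filter fun e : E => sigma tail head e v ≠ 0 ∧
        w.mu e - (sigma tail head e v : ZMod (n e)) = 0).card : ℤ) else 0)
    - ((Finset.univ.filter fun e : E => sigma tail head e v ≠ 0 ∧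
        w.mu e = 0 ∧ otherEnd tail head e v = u).card : ℤ)
  mu e := w.mu e - (sigma tail head e v : ZMod (n e))

/-- An admissible multidegree is concentrated at `v` if there is an ordering of all
vertices starting with `v` such that composing the negative twists at all previous
vertices makes the multidegree negative at each subsequent vertex. -/
def Concentrated (tail head : E → V) (n : E → ℕ) (w : AdmMD V E n) (v : V) : Prop :=
  ∃ l : List V, l.Nodup ∧ (∀ x : V, x ∈ l) ∧ l.head? = some v ∧
    ∀ (i : ℕ) (h : i < l.length), 0 < i →
      (((l.take i).foldl (negTwist tail head n) w).wV (l.get ⟨i, h⟩)) < 0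

/-- `w` is obtained from `w₀` by a finite sequence of twists, i.e. `w ∈ V(G(w₀))`. -/
def TwistSeq (tail head : E → V) (n : E → ℕ) (w₀ w : AdmMD V E n) : Prop :=
  ∃ l : List V, l.foldl (twist tail head n) w₀ = w

/-- `l` records the successive twist vertices of a minimal path from `w` to `w'`
in `G(w₀)`. -/
def IsMinPath (tail head : E → V) (n : E → ℕ) (w w' : AdmMD V E n) (l : List V) : Prop :=
  l.foldl (twist tail head n) w = w' ∧
    ∀ l' : List V, l'.foldl (twist tail head n) w = w' → l.length ≤ l'.length

/-- The membership condition describing the subgraph `Ḡ(w₀)` of `G(w₀)`: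
no minimal path from `w` to `w_v` involves twisting at `v`. -/
def InBarG (tail head : E → V) (n : E → ℕ) (w₀ : AdmMD V E n) (wv : V → AdmMD V E n)
    (w : AdmMD V E n) : Prop :=
  TwistSeq tail head n w₀ w ∧
    ∀ (v : V) (l : List V), IsMinPath tail head n w (wv v) l → v ∉ l

/-- Edges joining `v` and `u`. -/
noncomputable def edgesBetween (tail head : E → V) (v u : V) : Finset E :=
  Finset.univ.filter fun e => (tail e = v ∧ head e = u) ∨ (head e = v ∧ tail e = u)

/-- Edges adjacent to `v`. -/
noncomputable def edgesAdj (tail head : E → V) (v : V) : Finset E :=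
  Finset.univ.filter fun e => tail e = v ∨ head e = v

/-- The change of a divisor effected by a single chip-firing move at `v`. -/
noncomputable def fireDelta (tail head : E → V) (v : V) : V → ℤ := fun u =>
  ((edgesBetween tail head v u).card : ℤ)
    - (if u = v then ((edgesAdj tail head v).card : ℤ) else 0)

/-- A chip-firing move (twist) at `v`. -/
noncomputable def chipFire (tail head : E → V) (D : V → ℤ) (v : V) : V → ℤ :=
  fun u => D u + fireDelta tail head v u

/-- The inverse of a chip-firing move at `v`. -/
noncomputable def negChipFire (tail head : E → V) (D : V → ℤ) (v : V) : V → ℤ :=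
  fun u => D u - fireDelta tail head v u

/-- A divisor (multidegree) on a graph is concentrated at `v`. -/
def ConcentratedDiv (tail head : E → V) (D : V → ℤ) (v : V) : Prop :=
  ∃ l : List V, l.Nodup ∧ (∀ x : V, x ∈ l) ∧ l.head? = some v ∧
    ∀ (i : ℕ) (h : i < l.length), 0 < i →
      (((l.take i).foldl (negChipFire tail head) D) (l.get ⟨i, h⟩)) < 0

/-- A divisor on a graph is `v₀`-reduced. -/
def VReduced (tail head : E → V) (D : V → ℤ) (v₀ : V) : Prop :=
  (∀ u, u ≠ v₀ → 0 ≤ D u) ∧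
    ∀ S : Finset V, S.Nonempty → v₀ ∉ S →
      ∃ v ∈ S, D v < ((Finset.univ.filter fun e : E =>
        (tail e = v ∧ head e ∉ S) ∨ (head e = v ∧ tail e ∉ S)).card : ℤ)

/-- The function `D_{w,v}` on edges of `Γ` determined by a path `l` from `w` to `w_v`. -/
noncomputable def DFun (tail head : E → V) (n : E → ℕ) (w : AdmMD V E n) (l : List V)
    (v : V) (et : E) : ℤ :=
  (((Finset.univ : Finset (Fin l.length)).filter fun j =>
      l.get j = otherEnd tail head et v ∧
        ((l.take (j.val + 1)).foldl (twist tail head n) w).mu et = 0).card : ℤ)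
  - (((Finset.univ : Finset (Fin l.length)).filter fun j =>
      l.get j = v ∧ ((l.take j.val).foldl (twist tail head n) w).mu et = 0).card : ℤ)

end FinGraph

/-- The tail map of the subdivided graph `Γ̃`: the edge `e` of `Γ` is subdivided into
`𝐧(e)` edges `(e, j)`, `j = 0, …, 𝐧(e) - 1`, numbered from the tail of `e`; the new
vertices over `e` are `(e, i)`, `i = 0, …, 𝐧(e) - 2`, with `(e, i)` being the
`(i+1)`-st new vertex from the tail of `e`. -/
def tailT (tail head : E → V) (n : E → ℕ) :
    (Σ e : E, Fin (n e)) → V ⊕ Σ e : E, Fin (n e - 1) := fun p =>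
  if h : p.2.val = 0 then Sum.inl (tail p.1)
  else Sum.inr ⟨p.1, ⟨p.2.val - 1, by have := p.2.isLt; omega⟩⟩

/-- The head map of the subdivided graph `Γ̃`. -/
def headT (tail head : E → V) (n : E → ℕ) :
    (Σ e : E, Fin (n e)) → V ⊕ Σ e : E, Fin (n e - 1) := fun p =>
  if h : p.2.val = n p.1 - 1 then Sum.inl (head p.1)
  else Sum.inr ⟨p.1, ⟨p.2.val, by have := p.2.isLt; omega⟩⟩

/-- The multidegree on the subdivided graph `Γ̃` induced by an admissible multidegree:
it agrees with `w` on old vertices, is `1` on the `μ(e)`-th new vertex over `e`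
when `μ(e) ≠ 0`, and is `0` on all other new vertices. -/
noncomputable def inducedMD (n : E → ℕ) (w : AdmMD V E n) :
    (V ⊕ Σ e : E, Fin (n e - 1)) → ℤ
  | Sum.inl v => w.wV v
  | Sum.inr ⟨e, i⟩ => if (w.mu e).val = i.val + 1 then 1 else 0

/-- The simple graph `Γ̄` associated to the multigraph `Γ`: same vertices, one edge
between each pair of adjacent vertices. -/
def barGraph (tail head : E → V) : SimpleGraph V where
  Adj u v := u ≠ v ∧ ∃ e, (tail e = u ∧ head e = v) ∨ (tail e = v ∧ head e = u)
  symm := by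
    constructor
    intro u v h
    exact ⟨h.1.symm, h.2.imp fun e he => he.symm⟩
  loopless := ⟨fun u h => h.1 rfl⟩

/-!
After negative twists at distinct vertices `u₀, …, u_{i-1}`, the degree at any other vertex `u` has
dropped by exactly the number of edges `e` from `u` to `{u₀, …, u_{i-1}}` with `μ(e) = 0`, because
`μ(e)` only moves when twisting at an endpoint of `e`. So `w` is concentrated at `v₀` iff the
vertices can be ordered from `v₀` so that each has fewer chips than such edges back to its
predecessors, and a greedy argument turns this into Dhar's criterion: every nonempty
`S ⊆ V(Γ) ∖ {v₀}` has a vertex with fewer chips than edges `e` with `μ(e) = 0` leaving `S`.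

The criterion transfers to `Γ̃` because the chain of new vertices over `e` carries one chip if
`μ(e) ≠ 0` and none otherwise. A set `T ⊆ V(Γ̃)` where no vertex has fewer chips than edges
leaving `T` is closed along chip-free stretches of the chains, so it contains an old vertex, and
every edge with `μ(e) = 0` leaving its old part gives an edge of `Γ̃` leaving `T`. Conversely, for
`S ⊆ V(Γ)` run Dhar's algorithm on `Γ̃` from `V(Γ) ∖ S`: no new vertex it leaves unburnt can
burn, and an old vertex of `S` has at most one edge of `Γ̃` to the burnt part for each edge with
`μ(e) = 0` from it to `V(Γ) ∖ S`.
-/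

open Finset

section BurningSeq

variable {X : Type*}

def IsBurningSeq (P : X → Set X → Prop) (v₀ : X) (l : List X) : Prop :=
  l.Nodup ∧ l.head? = some v₀ ∧ ∀ (i : ℕ) (h : i < l.length), 0 < i → P l[i] {x | x ∈ l.take i}

variable {P : X → Set X → Prop} {v₀ : X}

lemma isBurningSeq_singleton : IsBurningSeq P v₀ [v₀] :=
  ⟨List.nodup_singleton v₀, rfl, fun i h hi => by simp only [List.length_singleton] at h; omega⟩

lemma IsBurningSeq.concat {l : List X} {u : X} (hl : IsBurningSeq P v₀ l) (hu : u ∉ l)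
    (hPu : P u {x | x ∈ l}) : IsBurningSeq P v₀ (l ++ [u]) := by
  obtain ⟨hnd, hhead, hP⟩ := hl
  refine ⟨hnd.append (List.nodup_singleton u) (by simpa using hu), ?_, fun i h hi => ?_⟩
  · cases l with
    | nil => simp at hhead
    | cons a t => simpa using hhead
  · rw [List.length_append, List.length_singleton] at h
    rcases Nat.lt_succ_iff_lt_or_eq.1 h with h | rfl
    · rw [List.getElem_append_left h, List.take_append_of_le_length h.le]
      exact hP i h hi
    · simpa using hPu

lemma IsBurningSeq.exists_complete [Fintype X]
    (h : ∀ S : Finset X, S.Nonempty → v₀ ∉ S → ∃ u ∈ S, P u (↑S)ᶜ) {l : List X}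
    (hl : IsBurningSeq P v₀ l) : ∃ l', IsBurningSeq P v₀ l' ∧ ∀ x, x ∈ l' := by
  induction hk : Fintype.card X - l.length generalizing l with
  | zero =>
    refine ⟨l, hl, fun x => ?_⟩
    have hcard := hl.1.length_le_card
    have : l.toFinset = univ :=
      eq_univ_of_card _ (by rw [List.toFinset_card_of_nodup hl.1]; omega)
    rw [← List.mem_toFinset, this]
    exact mem_univ x
  | succ k ih =>
    have hv₀ : v₀ ∈ l := List.mem_of_mem_head? hl.2.1
    have hne : (univ \ l.toFinset).Nonempty := by
      rw [sdiff_nonempty]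
      intro hsub
      have := card_le_card hsub
      rw [card_univ, List.toFinset_card_of_nodup hl.1] at this
      omega
    obtain ⟨u, hu, hPu⟩ := h _ hne (by simpa using hv₀)
    refine ih (hl.concat (by simpa using hu) ?_)
      (by rw [List.length_append, List.length_singleton]; omega)
    convert hPu using 1
    ext x; simp

lemma IsBurningSeq.exists_mem (hP : ∀ u, Monotone (P u)) {l : List X} (hl : IsBurningSeq P v₀ l)
    (hall : ∀ x, x ∈ l) (S : Finset X) (hS : S.Nonempty) (hv₀ : v₀ ∉ S) : ∃ u ∈ S, P u (↑S)ᶜ := by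
  obtain ⟨hnd, hhead, hPl⟩ := hl
  obtain ⟨x, hx⟩ := hS
  have hex : ∃ i, ∃ h : i < l.length, l[i] ∈ S := by
    obtain ⟨i, hi, rfl⟩ := List.getElem_of_mem (hall x)
    exact ⟨i, hi, hx⟩
  obtain ⟨hi, hiS⟩ := Nat.find_spec hex
  have hpos : 0 < Nat.find hex := by
    refine Nat.pos_of_ne_zero fun h0 => hv₀ ?_
    simp only [h0] at hiS
    cases l with
    | nil => simp at hhead
    | cons a t => simp_all
  refine ⟨_, hiS, hP _ (fun y hy hyS => ?_) (hPl _ hi hpos)⟩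
  obtain ⟨j, hj, rfl⟩ := List.mem_take_iff_getElem.1 hy
  exact Nat.find_min hex (lt_of_lt_of_le hj (min_le_left _ _)) ⟨_, hyS⟩

theorem exists_isBurningSeq_iff [Fintype X] (hP : ∀ u, Monotone (P u)) :
    (∃ l, IsBurningSeq P v₀ l ∧ ∀ x, x ∈ l) ↔
      ∀ S : Finset X, S.Nonempty → v₀ ∉ S → ∃ u ∈ S, P u (↑S)ᶜ :=
  ⟨fun ⟨_, hl, hall⟩ => hl.exists_mem hP hall, fun h => isBurningSeq_singleton.exists_complete h⟩

end BurningSeq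

lemma _root_.List.Nodup.getElem_notMem_take {α : Type*} {l : List α} (hl : l.Nodup) {i : ℕ}
    (hi : i < l.length) : l[i] ∉ l.take i := fun hm => by
  obtain ⟨j, hj, hji⟩ := List.mem_take_iff_getElem.1 hm
  rw [hl.getElem_inj_iff] at hji
  omega

section Multigraph

variable {V E : Type*} [Fintype E] (tail head : E → V)

noncomputable def edgesTo (u : V) (A : Set V) : Finset E :=
  {e | (tail e = u ∧ head e ∈ A) ∨ (head e = u ∧ tail e ∈ A)}

lemma edgesTo_mono (u : V) : Monotone (edgesTo tail head u) := fun _ _ hAB =>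
  monotone_filter_right _ fun _ _ => Or.imp (And.imp_right (@hAB _)) (And.imp_right (@hAB _))

lemma edgesTo_coe_compl [DecidableEq V] (u : V) (T : Finset V) :
    edgesTo tail head u (↑T)ᶜ =
      univ.filter fun e => (tail e = u ∧ head e ∉ T) ∨ (head e = u ∧ tail e ∉ T) := by
  ext
  simp [edgesTo]

lemma disjoint_edgesTo_singleton {u a : V} {A : Set V} (ha : a ∉ A) :
    Disjoint (edgesTo tail head u {a}) (edgesTo tail head u A) := by
  rw [disjoint_left]
  intro e h₁ h₂
  simp only [edgesTo, mem_filter, Set.mem_singleton_iff, mem_univ, true_and] at h₁ h₂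
  rcases h₁ with ⟨rfl, rfl⟩ | ⟨rfl, rfl⟩ <;> rcases h₂ with ⟨h, h'⟩ | ⟨h, h'⟩ <;> simp_all

lemma card_filter_edgesTo_insert (p : E → Prop) [DecidablePred p] {u a : V} {A : Set V}
    (ha : a ∉ A) :
    #{e ∈ edgesTo tail head u (insert a A) | p e} =
      #{e ∈ edgesTo tail head u {a} | p e} + #{e ∈ edgesTo tail head u A | p e} := by
  rw [← card_union_of_disjoint (disjoint_filter_filter (disjoint_edgesTo_singleton tail head ha)),
    ← filter_union]
  congr 1
  ext e
  simp only [edgesTo, mem_filter, mem_union, Set.mem_insert_iff, Set.mem_singleton_iff, mem_univ,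
    true_and]
  tauto

variable {n : E → ℕ}

lemma negTwist_wV_of_ne [DecidableEq V] (w : AdmMD V E n) {u a : V} (hua : u ≠ a) :
    (negTwist tail head n w a).wV u = w.wV u - #{e ∈ edgesTo tail head u {a} | w.mu e = 0} := by
  simp only [negTwist, if_neg hua, add_zero]
  congr 3
  ext e
  simp only [edgesTo, mem_filter, mem_univ, true_and, Set.mem_singleton_iff]
  unfold sigma otherEnd
  split_ifs <;> grind

lemma filter_negTwist_mu_eq_zero [DecidableEq V] (w : AdmMD V E n) {u a : V} {A : Set V}
    (hua : u ≠ a) (ha : a ∉ A) :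
    {e ∈ edgesTo tail head u A | (negTwist tail head n w a).mu e = 0} =
      {e ∈ edgesTo tail head u A | w.mu e = 0} := by
  refine filter_congr fun e he => ?_
  have : sigma tail head e a = 0 := by
    simp only [edgesTo, mem_filter, mem_univ, true_and] at he
    simp only [sigma]
    split_ifs <;> grind
  simp [negTwist, this]

lemma foldl_negTwist_wV [DecidableEq V] (w : AdmMD V E n) {l : List V} (hl : l.Nodup) {u : V}
    (hu : u ∉ l) :
    (l.foldl (negTwist tail head n) w).wV u =
      w.wV u - #{e ∈ edgesTo tail head u {x | x ∈ l} | w.mu e = 0} := by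
  induction l generalizing w with
  | nil => simp [edgesTo]
  | cons a l ih =>
    rw [List.nodup_cons] at hl
    rw [List.mem_cons, not_or] at hu
    have hcons : {x | x ∈ a :: l} = insert a {x | x ∈ l} := by ext; simp
    rw [List.foldl_cons, ih _ hl.2 hu.2, filter_negTwist_mu_eq_zero tail head w hu.1 hl.1,
      negTwist_wV_of_ne tail head w hu.1, hcons,
      card_filter_edgesTo_insert tail head _ (show a ∉ {x | x ∈ l} from hl.1)]
    push_cast
    ring

theorem concentrated_iff_exists_isBurningSeq [DecidableEq V] (w : AdmMD V E n) (v₀ : V) :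
    Concentrated tail head n w v₀ ↔
      ∃ l, IsBurningSeq (fun u A => w.wV u < #{e ∈ edgesTo tail head u A | w.mu e = 0}) v₀ l ∧
        ∀ x, x ∈ l := by
  refine exists_congr fun l =>
    ⟨fun ⟨hnd, hall, hhead, h⟩ => ⟨⟨hnd, hhead, fun i hi hpos => ?_⟩, hall⟩,
      fun ⟨⟨hnd, hhead, h⟩, hall⟩ => ⟨hnd, hall, hhead, fun i hi hpos => ?_⟩⟩ <;>
  · have key := foldl_negTwist_wV tail head w (hnd.sublist (List.take_sublist i l))
      (List.Nodup.getElem_notMem_take hnd hi)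
    have := h i hi hpos
    simp only [List.get_eq_getElem] at this ⊢
    omega

end Multigraph

lemma sigma_mk_fin_eq_iff {ι : Type*} {k : ι → ℕ} {a b : ι} {i : Fin (k a)} {j : Fin (k b)} :
    (⟨a, i⟩ : Σ x, Fin (k x)) = ⟨b, j⟩ ↔ a = b ∧ (i : ℕ) = j := by
  constructor
  · rintro ⟨⟩
    exact ⟨rfl, rfl⟩
  · rintro ⟨rfl, h⟩
    rw [Fin.ext h]

section Subdivision

variable {V E : Type*} (tail head : E → V) (n : E → ℕ)

/-- The vertex of `Γ̃` at position `q` along `e`, counted from the tail: `0` is `tail e`, the new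
vertex `(e, i)` sits at position `i + 1`, and `n e` is `head e`. -/
def subdivNode (e : E) (q : ℕ) : V ⊕ Σ e : E, Fin (n e - 1) :=
  if h0 : q = 0 then .inl (tail e)
  else if h : q < n e then .inr ⟨e, ⟨q - 1, by omega⟩⟩
  else .inl (head e)

variable {tail head n}

@[simp] lemma subdivNode_zero (e : E) : subdivNode tail head n e 0 = .inl (tail e) := rfl

lemma subdivNode_of_le {e : E} {q : ℕ} (hq0 : 0 < q) (hq : n e ≤ q) :
    subdivNode tail head n e q = .inl (head e) := by
  simp [subdivNode, hq0.ne', not_lt.2 hq]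

lemma subdivNode_of_lt {e : E} {q : ℕ} (hq0 : 0 < q) (hq : q < n e) :
    subdivNode tail head n e q = .inr ⟨e, ⟨q - 1, by omega⟩⟩ := by
  simp [subdivNode, hq0.ne', hq]

lemma tailT_eq (ε : Σ e : E, Fin (n e)) :
    tailT tail head n ε = subdivNode tail head n ε.1 ε.2 := by
  have := ε.2.isLt
  unfold tailT subdivNode
  split_ifs <;> rfl

lemma headT_eq (ε : Σ e : E, Fin (n e)) :
    headT tail head n ε = subdivNode tail head n ε.1 (ε.2 + 1) := by
  have := ε.2.isLt
  unfold headT subdivNode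
  split_ifs <;> simp_all <;> omega

lemma subdivNode_eq_inl_iff {e : E} {q : ℕ} {v : V} (hn : 0 < n e) (hq : q ≤ n e) :
    subdivNode tail head n e q = .inl v ↔ (q = 0 ∧ tail e = v) ∨ (q = n e ∧ head e = v) := by
  rcases Nat.eq_zero_or_pos q with rfl | hq0
  · simp [hn.ne]
  rcases hq.lt_or_eq with hq | rfl
  · simp [subdivNode_of_lt hq0 hq]
    omega
  · simp [subdivNode_of_le hq0 le_rfl, hq0.ne']

lemma subdivNode_eq_subdivNode_iff {e e' : E} {j q : ℕ} (hj : j ≤ n e') (hq0 : 0 < q)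
    (hq : q < n e) :
    subdivNode tail head n e' j = subdivNode tail head n e q ↔ e' = e ∧ j = q := by
  rw [subdivNode_of_lt hq0 hq]
  unfold subdivNode
  split_ifs with h0 h1
  · simp only [false_iff, not_and]
    rintro rfl
    omega
  · rw [Sum.inr.injEq, sigma_mk_fin_eq_iff (k := fun e => n e - 1)]
    constructor <;> rintro ⟨rfl, h⟩ <;> exact ⟨rfl, by simp only at h ⊢; omega⟩
  · simp only [false_iff, not_and]
    rintro rfl
    omega

lemma subdivNode_succ {e : E} (i : Fin (n e - 1)) :
    subdivNode tail head n e (i + 1) = .inr ⟨e, i⟩ := by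
  rw [subdivNode_of_lt (Nat.succ_pos _) (by omega)]
  rfl

lemma inducedMD_subdivNode (w : AdmMD V E n) {e : E} {q : ℕ} (hq0 : 0 < q) (hq : q < n e) :
    inducedMD n w (subdivNode tail head n e q) = if (w.mu e).val = q then 1 else 0 := by
  rw [subdivNode_of_lt hq0 hq]
  simp only [inducedMD, Nat.sub_add_cancel hq0]

variable [Fintype E]

lemma card_edgesTo_subdivNode (A : Set (V ⊕ Σ e : E, Fin (n e - 1))) {e : E} {q : ℕ}
    (hq0 : 0 < q) (hq : q < n e) :
    #(edgesTo (tailT tail head n) (headT tail head n) (subdivNode tail head n e q) A) =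
      (if subdivNode tail head n e (q + 1) ∈ A then 1 else 0) +
        (if subdivNode tail head n e (q - 1) ∈ A then 1 else 0) := by
  set a : Σ e : E, Fin (n e) := ⟨e, ⟨q, hq⟩⟩
  set b : Σ e : E, Fin (n e) := ⟨e, ⟨q - 1, by omega⟩⟩
  have htail : ∀ ε, tailT tail head n ε = subdivNode tail head n e q ↔ ε = a := fun ε => by
    rw [tailT_eq, subdivNode_eq_subdivNode_iff ε.2.isLt.le hq0 hq, sigma_mk_fin_eq_iff]
  have hhead : ∀ ε, headT tail head n ε = subdivNode tail head n e q ↔ ε = b :=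
    fun ⟨e', j⟩ => by
    rw [headT_eq, subdivNode_eq_subdivNode_iff j.isLt hq0 hq, sigma_mk_fin_eq_iff]
    constructor <;> rintro ⟨rfl, h⟩ <;> exact ⟨rfl, by simp only at h ⊢; omega⟩
  have hab : a ≠ b := by simp [a, b]; omega
  have : edgesTo (tailT tail head n) (headT tail head n) (subdivNode tail head n e q) A =
      (if subdivNode tail head n e (q + 1) ∈ A then {a} else ∅) ∪
        (if subdivNode tail head n e (q - 1) ∈ A then {b} else ∅) := by
    ext ε
    simp only [edgesTo, mem_filter, mem_univ, true_and, htail, hhead, mem_union]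
    have ha : headT tail head n a = subdivNode tail head n e (q + 1) := headT_eq a
    have hb : tailT tail head n b = subdivNode tail head n e (q - 1) := tailT_eq b
    constructor
    · rintro (⟨rfl, h⟩ | ⟨rfl, h⟩) <;> simp_all
    · split_ifs <;> simp only [mem_singleton, notMem_empty, or_false, false_or, false_imp_iff] <;>
        rintro (rfl | rfl) <;> simp_all
  rw [this, card_union_of_disjoint (by split_ifs <;> simp [hab])]
  split_ifs <;> simp

lemma mem_edgesTo_inl_iff {e : E} (hn : 0 < n e) {A : Set (V ⊕ Σ e : E, Fin (n e - 1))} {v : V}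
    {j : Fin (n e)} :
    ⟨e, j⟩ ∈ edgesTo (tailT tail head n) (headT tail head n) (.inl v) A ↔
      (j.val = 0 ∧ tail e = v ∧ subdivNode tail head n e 1 ∈ A) ∨
        (j.val + 1 = n e ∧ head e = v ∧ subdivNode tail head n e j ∈ A) := by
  simp only [edgesTo, mem_filter, mem_univ, true_and, tailT_eq, headT_eq,
    subdivNode_eq_inl_iff hn j.isLt.le, subdivNode_eq_inl_iff hn j.isLt, j.isLt.ne,
    Nat.succ_ne_zero, false_and, or_false, false_or]
  constructor
  · rintro (⟨⟨h0, rfl⟩, h⟩ | ⟨⟨hj, rfl⟩, h⟩)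
    · exact Or.inl ⟨h0, rfl, by rwa [h0] at h⟩
    · exact Or.inr ⟨hj, rfl, h⟩
  · rintro (⟨h0, rfl, h⟩ | ⟨hj, rfl, h⟩)
    · exact Or.inl ⟨⟨h0, rfl⟩, by rwa [h0]⟩
    · exact Or.inr ⟨⟨hj, rfl⟩, h⟩

variable (tail head n) in
/-- Dhar's burning algorithm on `Γ̃` started outside `T` burns no vertex of `T`. -/
def IsFireproof (w : AdmMD V E n) (T : Finset (V ⊕ Σ e : E, Fin (n e - 1))) : Prop :=
  ∀ u ∈ T, #(edgesTo (tailT tail head n) (headT tail head n) u (↑T)ᶜ) ≤ inducedMD n w u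

namespace IsFireproof

variable {w : AdmMD V E n} {T : Finset (V ⊕ Σ e : E, Fin (n e - 1))} {e : E}

lemma succ_mem_and_pred_mem (hT : IsFireproof tail head n w T) {q : ℕ} (hq0 : 0 < q)
    (hq : q < n e) (hmem : subdivNode tail head n e q ∈ T) (hc : (w.mu e).val ≠ q) :
    subdivNode tail head n e (q + 1) ∈ T ∧ subdivNode tail head n e (q - 1) ∈ T := by
  have := hT _ hmem
  rw [card_edgesTo_subdivNode _ hq0 hq, inducedMD_subdivNode w hq0 hq, if_neg hc] at this
  simp only [Set.mem_compl_iff, mem_coe] at this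
  constructor <;> by_contra h <;> simp only [h, not_false_eq_true, if_true] at this <;> omega

lemma succ_mem_or_pred_mem (hT : IsFireproof tail head n w T) {q : ℕ} (hq0 : 0 < q)
    (hq : q < n e) (hmem : subdivNode tail head n e q ∈ T) :
    subdivNode tail head n e (q + 1) ∈ T ∨ subdivNode tail head n e (q - 1) ∈ T := by
  have := hT _ hmem
  rw [card_edgesTo_subdivNode _ hq0 hq, inducedMD_subdivNode w hq0 hq] at this
  simp only [Set.mem_compl_iff, mem_coe] at this
  by_contra! h
  simp only [h.1, h.2, not_false_eq_true, if_true] at this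
  split_ifs at this <;> omega

lemma head_mem (hT : IsFireproof tail head n w T) {p : ℕ} (hp0 : 0 < p) (hp : p ≤ n e)
    (hmem : subdivNode tail head n e p ∈ T) (hc : ∀ q, p ≤ q → q < n e → (w.mu e).val ≠ q) :
    .inl (head e) ∈ T := by
  suffices ∀ q, p ≤ q → q ≤ n e → subdivNode tail head n e q ∈ T by
    simpa [subdivNode_of_le (hp0.trans_le hp) le_rfl] using this _ hp le_rfl
  intro q hpq
  induction q, hpq using Nat.le_induction with
  | base => exact fun _ => hmem
  | succ q hpq ih => exact fun hq =>
      (hT.succ_mem_and_pred_mem (by omega) (by omega) (ih (by omega)) (hc q hpq (by omega))).1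

lemma tail_mem (hT : IsFireproof tail head n w T) {p : ℕ} (hp : p < n e)
    (hmem : subdivNode tail head n e p ∈ T) (hc : ∀ q, 0 < q → q ≤ p → (w.mu e).val ≠ q) :
    .inl (tail e) ∈ T := by
  induction p with
  | zero => simpa using hmem
  | succ p ih =>
    exact ih (by omega) (hT.succ_mem_and_pred_mem (by omega) hp hmem (hc _ (by omega) le_rfl)).2
      fun q hq0 hq => hc q hq0 (by omega)

lemma exists_inl_mem (hT : IsFireproof tail head n w T) (hne : T.Nonempty) :
    ∃ v, .inl v ∈ T := by
  obtain ⟨v | ⟨e, i⟩, hu⟩ := hne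
  · exact ⟨v, hu⟩
  have hq : i.val + 1 < n e := by omega
  rw [← subdivNode_succ] at hu
  rcases lt_trichotomy (w.mu e).val (i.val + 1) with hc | hc | hc
  · exact ⟨_, hT.head_mem (by omega) hq.le hu fun q hq _ => by omega⟩
  · rcases hT.succ_mem_or_pred_mem (by omega) hq hu with h | h
    · exact ⟨_, hT.head_mem (by omega) (by omega) h fun q hq _ => by omega⟩
    · exact ⟨_, hT.tail_mem (by omega) h fun q _ hq => by omega⟩
  · exact ⟨_, hT.tail_mem hq hu fun q _ hq => by omega⟩

lemma card_filter_edgesTo_le_card_edgesTo [Fintype V] (hT : IsFireproof tail head n w T)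
    (hn : ∀ e, 0 < n e) {v : V} (hv : .inl v ∈ T) :
    #{e ∈ edgesTo tail head v (↑({x | .inl x ∈ T} : Finset V))ᶜ | w.mu e = 0} ≤
      #(edgesTo (tailT tail head n) (headT tail head n) (.inl v) (↑T)ᶜ) := by
  refine card_le_card_of_injOn (fun e => if tail e = v then ⟨e, ⟨0, hn e⟩⟩
    else ⟨e, ⟨n e - 1, Nat.sub_lt (hn e) one_pos⟩⟩) (fun e he => ?_) (fun e₁ _ e₂ _ h => ?_)
  · simp only [edgesTo, mem_coe, mem_filter, mem_univ, true_and, Set.mem_compl_iff] at he ⊢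
    obtain ⟨hjoin, hμ⟩ := he
    have hc : (w.mu e).val = 0 := (ZMod.val_eq_zero _).2 hμ
    rcases hjoin with ⟨rfl, ha⟩ | ⟨rfl, ha⟩
    · rw [if_pos rfl, tailT_eq, headT_eq]
      exact Or.inl ⟨rfl, fun h => ha (hT.head_mem one_pos (hn e) h fun q _ _ => by omega)⟩
    · rw [if_neg fun h => ha (by rwa [h]), tailT_eq, headT_eq]
      refine Or.inr ⟨subdivNode_of_le (Nat.succ_pos _) (by dsimp only; omega), fun h => ha ?_⟩
      exact hT.tail_mem (Nat.sub_lt (hn e) one_pos) h fun q _ _ => by omega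
  · have := congrArg Sigma.fst h
    dsimp only at this
    split_ifs at this <;> exact this

end IsFireproof

lemma exists_inducedMD_lt_of_forall_exists_wV_lt [Fintype V] (hn : ∀ e, 0 < n e)
    {w : AdmMD V E n} {v₀ : V}
    (h : ∀ S : Finset V, S.Nonempty → v₀ ∉ S →
      ∃ u ∈ S, w.wV u < #{e ∈ edgesTo tail head u (↑S)ᶜ | w.mu e = 0})
    (T : Finset (V ⊕ Σ e : E, Fin (n e - 1))) (hT : T.Nonempty) (hv₀ : .inl v₀ ∉ T) :
    ∃ u ∈ T, inducedMD n w u < #(edgesTo (tailT tail head n) (headT tail head n) u (↑T)ᶜ) := by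
  by_contra! hfp
  obtain ⟨v, hv⟩ := IsFireproof.exists_inl_mem hfp hT
  obtain ⟨u, hu, hlt⟩ := h {x | .inl x ∈ T} ⟨v, by simpa⟩ (by simpa)
  rw [mem_filter] at hu
  have := IsFireproof.card_filter_edgesTo_le_card_edgesTo hfp hn hu.2
  have := hfp _ hu.2
  simp only [inducedMD] at this
  omega

end Subdivision

section Unburnt

variable {V E : Type*} {tail head : E → V} {n : E → ℕ}

variable (tail head) in
/-- The vertices of `Γ̃` left unburnt by Dhar's algorithm started at the vertices of `Γ` outside
`S`: along `e` the fire spreads from a burning endpoint up to the new vertex at position `μ(e)`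
holding the chip of `e` (there is none if `μ(e) = 0`), which burns only if both endpoints burn. -/
def IsUnburnt (w : AdmMD V E n) (S : Finset V) : (V ⊕ Σ e : E, Fin (n e - 1)) → Prop
  | .inl v => v ∈ S
  | .inr ⟨e, i⟩ => (tail e ∈ S ∨ head e ∈ S) ∧
      (tail e ∈ S ∨ (w.mu e).val ≠ 0 ∧ (w.mu e).val ≤ i + 1) ∧
      (head e ∈ S ∨ (w.mu e).val ≠ 0 ∧ i + 1 ≤ (w.mu e).val)

lemma isUnburnt_subdivNode_iff {w : AdmMD V E n} {S : Finset V} {e : E} {q : ℕ} (hq : q ≤ n e) :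
    IsUnburnt tail head w S (subdivNode tail head n e q) ↔
      if q = 0 then tail e ∈ S else if q = n e then head e ∈ S else
        (tail e ∈ S ∨ head e ∈ S) ∧ (tail e ∈ S ∨ (w.mu e).val ≠ 0 ∧ (w.mu e).val ≤ q) ∧
          (head e ∈ S ∨ (w.mu e).val ≠ 0 ∧ q ≤ (w.mu e).val) := by
  rcases Nat.eq_zero_or_pos q with rfl | hq0
  · rfl
  rcases hq.lt_or_eq with hq | rfl
  · rw [subdivNode_of_lt hq0 hq, if_neg hq0.ne', if_neg hq.ne]
    simp only [IsUnburnt, Nat.sub_add_cancel hq0]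
  · rw [subdivNode_of_le hq0 le_rfl, if_neg hq0.ne', if_pos rfl]
    rfl

variable [Fintype E]

lemma card_edgesTo_subdivNode_le_of_isUnburnt [Fintype V] {w : AdmMD V E n} {S : Finset V}
    {e : E} {q : ℕ} (hq0 : 0 < q) (hq : q < n e)
    (hu : IsUnburnt tail head w S (subdivNode tail head n e q)) :
    #(edgesTo (tailT tail head n) (headT tail head n) (subdivNode tail head n e q)
      (↑({x | IsUnburnt tail head w S x} : Finset _))ᶜ) ≤
        inducedMD n w (subdivNode tail head n e q) := by
  rw [card_edgesTo_subdivNode _ hq0 hq, inducedMD_subdivNode w hq0 hq]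
  simp only [Set.mem_compl_iff, mem_coe, mem_filter, mem_univ, true_and]
  rw [isUnburnt_subdivNode_iff hq.le, if_neg hq0.ne', if_neg hq.ne] at hu
  rw [isUnburnt_subdivNode_iff hq, isUnburnt_subdivNode_iff (q := q - 1) (by omega),
    if_neg (Nat.succ_ne_zero q), if_neg (show q - 1 ≠ n e by omega)]
  have : NeZero (n e) := ⟨by omega⟩
  have hc := ZMod.val_lt (w.mu e)
  generalize (w.mu e).val = c at hu hc ⊢
  -- An unburnt new vertex without the chip has unburnt neighbours; the one with it has one.
  by_cases ht : tail e ∈ S <;> by_cases hh : head e ∈ S <;>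
    simp only [ht, hh, true_or, or_true, false_or, or_false, true_and, and_true, false_and]
      at hu ⊢ <;>
    split_ifs <;> first | omega | simp_all

lemma card_edgesTo_inl_le_card_filter_edgesTo [Fintype V] (hloop : Loopless tail head)
    (hn : ∀ e, 0 < n e) {w : AdmMD V E n} {S : Finset V} {v : V} (hv : v ∈ S) :
    #(edgesTo (tailT tail head n) (headT tail head n) (.inl v)
      (↑({x | IsUnburnt tail head w S x} : Finset _))ᶜ) ≤
        #{e ∈ edgesTo tail head v (↑S)ᶜ | w.mu e = 0} := by
  refine card_le_card_of_injOn Sigma.fst (fun ⟨e, j⟩ hε => ?_)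
    (fun ⟨e₁, j₁⟩ h₁ ⟨e₂, j₂⟩ h₂ h => ?_)
  · have : NeZero (n e) := ⟨(hn e).ne'⟩
    have hc := ZMod.val_lt (w.mu e)
    rw [mem_coe, mem_edgesTo_inl_iff (hn e)] at hε
    simp only [Set.mem_compl_iff, mem_coe, mem_filter, mem_univ, true_and] at hε
    simp only [mem_coe, mem_filter, edgesTo, mem_univ, true_and, Set.mem_compl_iff,
      ← ZMod.val_eq_zero]
    rcases hε with ⟨-, rfl, hε⟩ | ⟨hj, rfl, hε⟩
    · rw [isUnburnt_subdivNode_iff (q := 1) (hn e), if_neg one_ne_zero] at hε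
      have : head e ∉ S ∧ (w.mu e).val = 0 := by
        split_ifs at hε
        · exact ⟨hε, by omega⟩
        · simp only [hv, true_or, true_and, not_or, not_and, not_le] at hε
          exact ⟨hε.1, by omega⟩
      exact ⟨Or.inl ⟨rfl, this.1⟩, this.2⟩
    · rw [isUnburnt_subdivNode_iff j.isLt.le, if_neg j.isLt.ne] at hε
      have : tail e ∉ S ∧ (w.mu e).val = 0 := by
        split_ifs at hε
        · exact ⟨hε, by omega⟩
        · simp only [hv, or_true, true_or, true_and, and_true, not_or, not_and, not_le] at hε
          exact ⟨hε.1, by omega⟩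
      exact ⟨Or.inr ⟨rfl, this.1⟩, this.2⟩
  · simp only at h
    subst h
    rw [mem_coe, mem_edgesTo_inl_iff (hn _)] at h₁ h₂
    rw [sigma_mk_fin_eq_iff]
    refine ⟨rfl, ?_⟩
    rcases h₁ with ⟨h₁, rfl, -⟩ | ⟨h₁, rfl, -⟩ <;> rcases h₂ with ⟨h₂, h, -⟩ | ⟨h₂, h, -⟩
    all_goals first | omega | exact absurd h (hloop _) | exact absurd h.symm (hloop _)

lemma exists_wV_lt_of_forall_exists_inducedMD_lt [Fintype V] (hloop : Loopless tail head)
    (hn : ∀ e, 0 < n e) {w : AdmMD V E n} {v₀ : V}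
    (h : ∀ T : Finset (V ⊕ Σ e : E, Fin (n e - 1)), T.Nonempty → .inl v₀ ∉ T →
      ∃ u ∈ T, inducedMD n w u < #(edgesTo (tailT tail head n) (headT tail head n) u (↑T)ᶜ))
    (S : Finset V) (hS : S.Nonempty) (hv₀ : v₀ ∉ S) :
    ∃ u ∈ S, w.wV u < #{e ∈ edgesTo tail head u (↑S)ᶜ | w.mu e = 0} := by
  obtain ⟨v, hv⟩ := hS
  obtain ⟨u, hu, hlt⟩ := h {x | IsUnburnt tail head w S x} ⟨.inl v, by simpa [IsUnburnt]⟩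
    (by simpa [IsUnburnt])
  rw [mem_filter] at hu
  rcases u with u | ⟨e, i⟩
  · exact ⟨u, hu.2, hlt.trans_le <| by
      exact_mod_cast card_edgesTo_inl_le_card_filter_edgesTo hloop hn hu.2⟩
  · rw [← subdivNode_succ] at hu hlt
    exact absurd hlt
      (not_lt.2 (card_edgesTo_subdivNode_le_of_isUnburnt (Nat.succ_pos _) (by omega) hu.2))

end Unburnt

theorem statement_4_general {V E : Type*} [Fintype V] [Fintype E] [DecidableEq V] [DecidableEq E]
    (tail head : E → V) (n : E → ℕ)
    (hloop : Loopless tail head)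
    (hn : ∀ e, 0 < n e)
    (w : AdmMD V E n) (v₀ : V) :
    Concentrated tail head n w v₀ ↔
      ∀ S : Finset (V ⊕ Σ e : E, Fin (n e - 1)), S.Nonempty → (Sum.inl v₀) ∉ S →
        ∃ u ∈ S, inducedMD n w u <
          ((Finset.univ.filter fun ε : Σ e : E, Fin (n e) =>
            (tailT tail head n ε = u ∧ headT tail head n ε ∉ S) ∨
            (headT tail head n ε = u ∧ tailT tail head n ε ∉ S)).card : ℤ) := by
  have hmono : ∀ u, Monotone fun A => w.wV u < #{e ∈ edgesTo tail head u A | w.mu e = 0} :=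
    fun u A B hAB h => h.trans_le <| by
      exact_mod_cast card_le_card (filter_subset_filter _ (edgesTo_mono tail head u hAB))
  simp only [← edgesTo_coe_compl]
  rw [concentrated_iff_exists_isBurningSeq, exists_isBurningSeq_iff hmono]
  exact ⟨exists_inducedMD_lt_of_forall_exists_wV_lt hn,
    exists_wV_lt_of_forall_exists_inducedMD_lt hloop hn⟩

/-- an admissible multidegree is concentrated at `v₀` iff its induced
multidegree `w̃` on `Γ̃` satisfies: for every nonempty `S ⊆ V(Γ̃)∖{v₀}` there is `u ∈ S`
with `w̃(u)` strictly smaller than the number of edges of `Γ̃` from `u` to `V(Γ̃)∖S`. -/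
theorem statement_4 {V E : Type*} [Fintype V] [Fintype E] [DecidableEq V] [DecidableEq E]
    (tail head : E → V) (n : E → ℕ)
    (hloop : Loopless tail head) (hconn : MGConnected tail head)
    (hn : ∀ e, 0 < n e)
    (w : AdmMD V E n) (v₀ : V) :
    Concentrated tail head n w v₀ ↔
      ∀ S : Finset (V ⊕ Σ e : E, Fin (n e - 1)), S.Nonempty → (Sum.inl v₀) ∉ S →
        ∃ u ∈ S, inducedMD n w u <
          ((Finset.univ.filter fun ε : Σ e : E, Fin (n e) =>
            (tailT tail head n ε = u ∧ headT tail head n ε ∉ S) ∨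
            (headT tail head n ε = u ∧ tailT tail head n ε ∉ S)).card : ℤ) :=
  statement_4_general tail head n hloop hn w v₀

end LLS
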